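/- Under the stated operator setting, let 1 ≤ k ≤ min{p, n}, let λ₁ ≥ ⋯ ≥ λ_n be the Ritz values of T on Φ with Ritz basis γ₁, …, γ_n, and assume λ_k > μ_{k+1} (with the convention μ_{k+1} = μ_{r+1} if k = r). Then d_F(span{η₁, …, η_k}, Φ)² ≤ d_F(span{γ₁, …, γ_k}, span{η₁, …, η_k})² ≤ (1 + (1/4) · (μ_{k+1}/(λ_k − μ_{k+1}))²) · d_F(span{η₁, …, η_k}, Φ)². -/

import Mathlib

/-!
Write `E = span{η₁, …, η_k}`, `G = span{γ₁, …, γ_k}` and `V = P_Φ E ⊆ Φ`. Expanding the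
projection distances in the orthonormal families, `d_F(G, E)² - d_F(E, Φ)² = ∑_{j > k} ‖P_E γ_j‖²`,
which is nonnegative, and at most `∑_{j ≤ k} ‖γ_j - P_V γ_j‖²` because `‖P_E γ_j‖ ≤ ‖P_V γ_j‖`
on `Φ` and `dim V ≤ k`. For `j ≤ k` the residual `h = γ_j - P_V γ_j` lies in `Φ ∩ Eᗮ`, so the
Ritz equation gives `(λ_j - μ_{k+1}) ‖h‖² ≤ ⟪h, T P_V γ_j⟫ = ⟪h, (T - μ_{k+1}/2) P_{Eᗮ} P_V γ_j⟫`,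
and `‖T - μ_{k+1}/2‖ ≤ μ_{k+1}/2` on `Eᗮ` since `0 ≤ T ≤ μ_{k+1}` there. Summing over `j ≤ k`
and using `∑_{j ≤ k} ‖P_{Eᗮ} P_V γ_j‖² ≤ d_F(E, Φ)²` gives the factor
`(μ_{k+1} / (2 (λ_k - μ_{k+1})))²`.
-/

open scoped RealInnerProductSpace ENNReal
open Submodule Filter

noncomputable section

variable {H : Type*} [NormedAddCommGroup H] [InnerProductSpace ℝ H] [CompleteSpace H]

/-- Orthogonal projection onto `U`, as an operator `H → H` (defined to be `0` in the
degenerate case where `U` admits no orthogonal projection). -/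
noncomputable def proj (U : Submodule ℝ H) : H →L[ℝ] H := by
  classical
  exact if h : HasOrthogonalProjection U then
    (haveI := h; U.subtypeL ∘L orthogonalProjection U)
  else 0

/-- Squared Hilbert–Schmidt norm of an operator, computed in a fixed Hilbert basis of `H`. -/
noncomputable def hsNormSq (A : H →L[ℝ] H) : ℝ≥0∞ :=
  ∑' i : (exists_hilbertBasis ℝ H).choose,
    (‖A ((exists_hilbertBasis ℝ H).choose_spec.choose i)‖₊ : ℝ≥0∞) ^ 2

/-- Hilbert–Schmidt (Frobenius) norm of an operator. -/
noncomputable def hsNorm (A : H →L[ℝ] H) : ℝ := Real.sqrt (hsNormSq A).toReal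

/-- Projection distance `d_F(U, W) = ‖P_{Wᗮ} P_U‖_F`. -/
noncomputable def dF (U W : Submodule ℝ H) : ℝ := hsNorm ((proj Wᗮ) ∘L (proj U))

/-- Gap distance `d₂(U, W) = ‖P_{Wᗮ} P_U‖₂`. -/
noncomputable def d2 (U W : Submodule ℝ H) : ℝ := ‖(proj Wᗮ) ∘L (proj U)‖

section FiniteOrthonormal

variable {E : Type*} [NormedAddCommGroup E] [InnerProductSpace ℝ E] {ι : Type*}

instance finiteDimensional_span_image_finset (s : Finset ι) (v : ι → E) :
    FiniteDimensional ℝ (span ℝ (v '' s)) :=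
  FiniteDimensional.span_of_finite ℝ (s.finite_toSet.image v)

theorem finrank_span_image_finset_le (s : Finset ι) (v : ι → E) :
    Module.finrank ℝ (span ℝ (v '' s)) ≤ s.card := by
  classical
  rw [← Finset.coe_image]
  exact (finrank_span_finset_le_card _).trans Finset.card_image_le

def OrthonormalOn [DecidableEq ι] (s : Finset ι) (v : ι → E) : Prop :=
  ∀ i ∈ s, ∀ j ∈ s, ⟪v i, v j⟫ = if i = j then (1 : ℝ) else 0

variable [DecidableEq ι] {s : Finset ι} {v : ι → E}

theorem OrthonormalOn.inner_sum_smul (hv : OrthonormalOn s v) (c : ι → ℝ) {i : ι} (hi : i ∈ s) :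
    ⟪v i, ∑ j ∈ s, c j • v j⟫ = c i := by
  rw [inner_sum, Finset.sum_eq_single_of_mem i hi fun j hj hji => by
      rw [real_inner_smul_right, hv i hi j hj, if_neg hji.symm, mul_zero],
    real_inner_smul_right, hv i hi i hi, if_pos rfl, mul_one]

theorem OrthonormalOn.norm_sq_sum_smul (hv : OrthonormalOn s v) (c : ι → ℝ) :
    ‖∑ i ∈ s, c i • v i‖ ^ 2 = ∑ i ∈ s, c i ^ 2 := by
  rw [← real_inner_self_eq_norm_sq, sum_inner]
  exact Finset.sum_congr rfl fun i hi => by rw [real_inner_smul_left, hv.inner_sum_smul c hi, sq]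

theorem OrthonormalOn.starProjection_span (hv : OrthonormalOn s v) (x : E) :
    (span ℝ (v '' s)).starProjection x = ∑ i ∈ s, ⟪v i, x⟫ • v i := by
  refine eq_starProjection_of_mem_of_inner_eq_zero
    (sum_mem fun i hi => smul_mem _ _ (subset_span ⟨i, hi, rfl⟩)) fun w hw => ?_
  suffices span ℝ (v '' s) ≤ (ℝ ∙ (x - ∑ i ∈ s, ⟪v i, x⟫ • v i))ᗮ from
    mem_orthogonal_singleton_iff_inner_right.1 (this hw)
  rw [span_le]
  rintro _ ⟨j, hj, rfl⟩
  rw [SetLike.mem_coe, mem_orthogonal_singleton_iff_inner_right, real_inner_comm, inner_sub_right,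
    hv.inner_sum_smul _ hj, sub_self]

theorem OrthonormalOn.norm_sq_starProjection_span (hv : OrthonormalOn s v) (x : E) :
    ‖(span ℝ (v '' s)).starProjection x‖ ^ 2 = ∑ i ∈ s, ⟪v i, x⟫ ^ 2 := by
  rw [hv.starProjection_span, hv.norm_sq_sum_smul]

theorem OrthonormalOn.sum_norm_sq_starProjection_comm {κ : Type*} [DecidableEq κ] {t : Finset κ}
    {w : κ → E} (hv : OrthonormalOn s v) (hw : OrthonormalOn t w) :
    ∑ i ∈ s, ‖(span ℝ (w '' t)).starProjection (v i)‖ ^ 2 =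
      ∑ j ∈ t, ‖(span ℝ (v '' s)).starProjection (w j)‖ ^ 2 := by
  simp_rw [hv.norm_sq_starProjection_span, hw.norm_sq_starProjection_span, real_inner_comm (v _)]
  exact Finset.sum_comm

theorem OrthonormalOn.norm_sq (hv : OrthonormalOn s v) {i : ι} (hi : i ∈ s) : ‖v i‖ ^ 2 = 1 := by
  rw [← real_inner_self_eq_norm_sq, hv i hi i hi, if_pos rfl]

end FiniteOrthonormal

section Projection

variable {E : Type*} [NormedAddCommGroup E] [InnerProductSpace ℝ E]

theorem proj_eq_starProjection (U : Submodule ℝ E) [U.HasOrthogonalProjection] :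
    proj U = U.starProjection := by
  rw [proj, dif_pos ‹_›]
  rfl

theorem OrthonormalBasis.norm_sq_starProjection {ι : Type*} [Fintype ι] {V : Submodule ℝ E}
    [V.HasOrthogonalProjection] (b : OrthonormalBasis ι ℝ V) (x : E) :
    ‖V.starProjection x‖ ^ 2 = ∑ i, ⟪(b i : E), x⟫ ^ 2 := by
  rw [starProjection_apply, norm_coe, ← b.sum_sq_inner_right]
  simp_rw [coe_inner, ← starProjection_apply, ← inner_starProjection_left_eq_right,
    starProjection_eq_self_iff.2 (b _).2]

theorem OrthonormalOn.sum_norm_sq_starProjection_of_le {ι : Type*} [DecidableEq ι] {t : Finset ι}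
    {w : ι → E} (hw : OrthonormalOn t w) {V : Submodule ℝ E} [FiniteDimensional ℝ V]
    (hV : V ≤ span ℝ (w '' t)) :
    ∑ j ∈ t, ‖V.starProjection (w j)‖ ^ 2 = Module.finrank ℝ V := by
  let b := stdOrthonormalBasis ℝ V
  calc ∑ j ∈ t, ‖V.starProjection (w j)‖ ^ 2 = ∑ a, ∑ j ∈ t, ⟪w j, b a⟫ ^ 2 := by
        simp_rw [b.norm_sq_starProjection, real_inner_comm (w _)]
        exact Finset.sum_comm
    _ = ∑ a, ‖(b a : E)‖ ^ 2 := by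
        simp_rw [← hw.norm_sq_starProjection_span, starProjection_eq_self_iff.2 (hV (b _).2)]
    _ = Module.finrank ℝ V := by simp [norm_coe, b.orthonormal.1]

theorem starProjection_starProjection_of_le {U V W : Submodule ℝ E} [U.HasOrthogonalProjection]
    [V.HasOrthogonalProjection] [W.HasOrthogonalProjection] (hVW : V ≤ W)
    (hUV : ∀ x ∈ U, W.starProjection x ∈ V) {y : E} (hy : y ∈ W) :
    U.starProjection (V.starProjection y) = U.starProjection y := by
  have hres : y - V.starProjection y ∈ Uᗮ := fun x hx => by
    have hyW : y - V.starProjection y ∈ W := W.sub_mem hy (hVW (starProjection_apply_mem V y))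
    rw [← starProjection_eq_self_iff.2 hyW, ← inner_starProjection_left_eq_right]
    exact (sub_starProjection_mem_orthogonal y) _ (hUV x hx)
  rw [eq_comm, ← sub_eq_zero, ← map_sub, starProjection_apply_eq_zero_iff]
  exact hres

end Projection

section HilbertSchmidt

open scoped InnerProduct

theorem HilbertBasis.hasSum_norm_sq_apply {κ ι : Type*} (b : HilbertBasis κ ℝ H)
    {A : H →L[ℝ] H} {s : Finset ι} {v u : ι → H} (hA : ∀ x, A x = ∑ i ∈ s, ⟪v i, x⟫ • u i) :
    HasSum (fun β => ‖A (b β)‖ ^ 2) (∑ i ∈ s, ⟪A (v i), u i⟫) := by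
  have hnorm : ∀ x, ‖A x‖ ^ 2 = ∑ i ∈ s, ⟪v i, x⟫ * ⟪x, (A†) (u i)⟫ := fun x => by
    rw [← real_inner_self_eq_norm_sq]
    nth_rewrite 1 [hA x]
    simp_rw [sum_inner, real_inner_smul_left, ContinuousLinearMap.adjoint_inner_right,
      real_inner_comm (A x)]
  simp_rw [hnorm, ← ContinuousLinearMap.adjoint_inner_right]
  exact hasSum_sum fun i _ => b.hasSum_inner_mul_inner (v i) ((A†) (u i))

theorem hsNorm_sq_eq_of_hasSum {A : H →L[ℝ] H} {c : ℝ}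
    (h : HasSum (fun β => ‖A ((exists_hilbertBasis ℝ H).choose_spec.choose β)‖ ^ 2) c) :
    hsNorm A ^ 2 = c := by
  have hc : 0 ≤ c := h.nonneg fun _ => sq_nonneg _
  have hsq : hsNormSq A = ENNReal.ofReal c := by
    simp_rw [hsNormSq, ← ENNReal.ofReal_coe_nnreal, coe_nnnorm,
      ← ENNReal.ofReal_pow (norm_nonneg _)]
    rw [← ENNReal.ofReal_tsum_of_nonneg (fun _ => sq_nonneg _) h.summable, h.tsum_eq]
  rw [hsNorm, hsq, ENNReal.toReal_ofReal hc, Real.sq_sqrt hc]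

variable {ι : Type*} [DecidableEq ι] {s : Finset ι} {v : ι → H}

theorem OrthonormalOn.hsNorm_comp_proj_span_sq (hv : OrthonormalOn s v) (A : H →L[ℝ] H) :
    hsNorm (A ∘L proj (span ℝ (v '' s))) ^ 2 = ∑ i ∈ s, ‖A (v i)‖ ^ 2 := by
  have hA : ∀ x, (A ∘L proj (span ℝ (v '' s))) x = ∑ i ∈ s, ⟪v i, x⟫ • A (v i) := fun x => by
    simp [proj_eq_starProjection, hv.starProjection_span]
  rw [hsNorm_sq_eq_of_hasSum ((exists_hilbertBasis ℝ H).choose_spec.choose.hasSum_norm_sq_apply hA)]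
  refine Finset.sum_congr rfl fun i hi => ?_
  rw [ContinuousLinearMap.comp_apply, proj_eq_starProjection,
    starProjection_eq_self_iff.2 (subset_span (Set.mem_image_of_mem v hi)),
    real_inner_self_eq_norm_sq]

theorem OrthonormalOn.dF_span_sq (hv : OrthonormalOn s v) (W : Submodule ℝ H)
    [W.HasOrthogonalProjection] :
    dF (span ℝ (v '' s)) W ^ 2 = s.card - ∑ i ∈ s, ‖W.starProjection (v i)‖ ^ 2 := by
  rw [dF, hv.hsNorm_comp_proj_span_sq, proj_eq_starProjection, Finset.card_eq_sum_ones,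
    Nat.cast_sum, ← Finset.sum_sub_distrib]
  refine Finset.sum_congr rfl fun i hi => ?_
  have := norm_sq_eq_add_norm_sq_starProjection (v i) W
  rw [hv.norm_sq hi] at this
  push_cast
  linarith

end HilbertSchmidt

section Operator

variable {E : Type*} [NormedAddCommGroup E] [InnerProductSpace ℝ E] {T : E →L[ℝ] E}

theorem apply_mem_span_image_of_eigen {ι : Type*} {s : Set ι} {η : ι → E} {μ : ι → ℝ}
    (hTη : ∀ i ∈ s, T (η i) = μ i • η i) {x : E} (hx : x ∈ span ℝ (η '' s)) :
    T x ∈ span ℝ (η '' s) := by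
  have hle : span ℝ (η '' s) ≤ (span ℝ (η '' s)).comap (T : E →ₗ[ℝ] E) := by
    rw [span_le]
    rintro _ ⟨i, hi, rfl⟩
    simpa [hTη i hi] using smul_mem _ (μ i) (subset_span (Set.mem_image_of_mem η hi))
  exact hle hx

theorem OrthonormalOn.inner_apply_le_of_mem_span {ι : Type*} [DecidableEq ι] {s : Finset ι}
    {η : ι → E} (hη : OrthonormalOn s η) {μ : ι → ℝ} (hTη : ∀ i ∈ s, T (η i) = μ i • η i)
    {m : ℝ} (hμ : ∀ i ∈ s, μ i ≤ m) {x : E} (hx : x ∈ span ℝ (η '' s)) :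
    ⟪x, T x⟫ ≤ m * ‖x‖ ^ 2 := by
  rw [← starProjection_eq_self_iff.2 hx, hη.starProjection_span, hη.norm_sq_sum_smul]
  set c := fun i => ⟪η i, x⟫
  have hTx : T (∑ i ∈ s, c i • η i) = ∑ i ∈ s, (μ i * c i) • η i := by
    simp_rw [map_sum, map_smul]
    exact Finset.sum_congr rfl fun i hi => by rw [hTη i hi, smul_smul, mul_comm]
  rw [hTx, sum_inner, Finset.mul_sum]
  refine Finset.sum_le_sum fun i hi => ?_
  rw [real_inner_smul_left, hη.inner_sum_smul _ hi]
  nlinarith [hμ i hi, sq_nonneg (c i)]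

theorem inner_apply_sub_smul_le {U : Submodule ℝ E} [U.HasOrthogonalProjection]
    (hTU : ∀ x ∈ U, T x ∈ U) {θ : ℝ} (hcontr : ∀ z ∈ Uᗮ, ‖T z - θ • z‖ ≤ θ * ‖z‖) {h : E}
    (hh : h ∈ Uᗮ) (g : E) : ⟪h, T g - θ • g⟫ ≤ θ * ‖Uᗮ.starProjection g‖ * ‖h‖ := by
  set w := Uᗮ.starProjection g
  have hU : T (U.starProjection g) - θ • U.starProjection g ∈ U :=
    U.sub_mem (hTU _ (starProjection_apply_mem U g)) (U.smul_mem θ (starProjection_apply_mem U g))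
  have hsplit :
      T g - θ • g = (T (U.starProjection g) - θ • U.starProjection g) + (T w - θ • w) := by
    conv_lhs => rw [← starProjection_add_starProjection_orthogonal (K := U) g]
    rw [map_add, smul_add]
    abel
  rw [hsplit, inner_add_right, inner_left_of_mem_orthogonal hU hh, zero_add]
  calc ⟪h, T w - θ • w⟫ ≤ ‖h‖ * ‖T w - θ • w‖ := real_inner_le_norm _ _
    _ ≤ ‖h‖ * (θ * ‖w‖) :=
        mul_le_mul_of_nonneg_left (hcontr w (starProjection_apply_mem _ g)) (norm_nonneg h)
    _ = θ * ‖w‖ * ‖h‖ := by ring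

section Ritz

variable {U V Φ : Submodule ℝ E} [U.HasOrthogonalProjection] [V.HasOrthogonalProjection]
  [Φ.HasOrthogonalProjection] (hVΦ : V ≤ Φ) (hUV : ∀ x ∈ U, Φ.starProjection x ∈ V)
  (hTU : ∀ x ∈ U, T x ∈ U) {m θ lam : ℝ} (hray : ∀ z ∈ Uᗮ, ⟪z, T z⟫ ≤ m * ‖z‖ ^ 2)
  (hcontr : ∀ z ∈ Uᗮ, ‖T z - θ • z‖ ≤ θ * ‖z‖) {γ : E} (hγ : γ ∈ Φ)
  (hritz : Φ.starProjection (T γ) = lam • γ)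
include hVΦ hUV hTU hray hcontr hγ hritz

theorem ritz_residual_le :
    (lam - m) * ‖γ - V.starProjection γ‖ ≤ θ * ‖Uᗮ.starProjection (V.starProjection γ)‖ := by
  set g := V.starProjection γ
  set h := γ - g
  have hgV : g ∈ V := starProjection_apply_mem V γ
  have hhV : h ∈ Vᗮ := sub_starProjection_mem_orthogonal γ
  have hhΦ : h ∈ Φ := Φ.sub_mem hγ (hVΦ hgV)
  have hhU : h ∈ Uᗮ := fun x hx => by
    rw [← starProjection_eq_self_iff.2 hhΦ, ← inner_starProjection_left_eq_right]
    exact inner_right_of_mem_orthogonal (hUV x hx) hhV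
  have hhg : ⟪h, g⟫ = 0 := inner_left_of_mem_orthogonal hgV hhV
  have hRitz : ⟪h, T γ⟫ = lam * ‖h‖ ^ 2 :=
    calc ⟪h, T γ⟫ = ⟪Φ.starProjection h, T γ⟫ := by rw [starProjection_eq_self_iff.2 hhΦ]
      _ = lam * ⟪h, g + h⟫ := by
        rw [inner_starProjection_left_eq_right, hritz, real_inner_smul_right, add_sub_cancel]
      _ = lam * ‖h‖ ^ 2 := by rw [inner_add_right, hhg, zero_add, real_inner_self_eq_norm_sq]
  have hsplit : ⟪h, T γ⟫ = ⟪h, T g - θ • g⟫ + ⟪h, T h⟫ := by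
    rw [inner_sub_right, real_inner_smul_right, hhg, mul_zero, sub_zero, ← inner_add_right,
      ← map_add, add_sub_cancel]
  have hkey : (lam - m) * ‖h‖ * ‖h‖ ≤ θ * ‖Uᗮ.starProjection g‖ * ‖h‖ := by
    nlinarith [inner_apply_sub_smul_le hTU hcontr hhU g, hray h hhU]
  rcases (norm_nonneg h).eq_or_lt with h0 | h0
  · rw [← h0, mul_zero]
    exact (norm_nonneg _).trans (hcontr _ (starProjection_apply_mem _ g))
  · exact le_of_mul_le_mul_right hkey h0

theorem ritz_residual_sq_le {gp : ℝ} (hgp : 0 ≤ gp) (hgap : gp ≤ lam - m) :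
    gp ^ 2 * (‖γ‖ ^ 2 - ‖V.starProjection γ‖ ^ 2) ≤
      θ ^ 2 * (‖V.starProjection γ‖ ^ 2 - ‖U.starProjection γ‖ ^ 2) := by
  have hres := ritz_residual_le hVΦ hUV hTU hray hcontr hγ hritz
  have hh : ‖γ - V.starProjection γ‖ ^ 2 = ‖γ‖ ^ 2 - ‖V.starProjection γ‖ ^ 2 := by
    rw [← starProjection_orthogonal_val]
    linarith [norm_sq_eq_add_norm_sq_starProjection γ V]
  have hw : ‖Uᗮ.starProjection (V.starProjection γ)‖ ^ 2 =
      ‖V.starProjection γ‖ ^ 2 - ‖U.starProjection γ‖ ^ 2 := by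
    rw [← starProjection_starProjection_of_le hVΦ hUV hγ]
    linarith [norm_sq_eq_add_norm_sq_starProjection (V.starProjection γ) U]
  rw [← hh, ← hw, ← mul_pow, ← mul_pow]
  exact pow_le_pow_left₀ (by positivity)
    ((mul_le_mul_of_nonneg_right hgap (norm_nonneg _)).trans hres) 2

end Ritz

variable (hT : ∀ x y, ⟪T x, y⟫ = ⟪x, T y⟫)
include hT

theorem apply_mem_orthogonal_of_invariant {U : Submodule ℝ E} (hTU : ∀ x ∈ U, T x ∈ U) {z : E}
    (hz : z ∈ Uᗮ) : T z ∈ Uᗮ := fun x hx => by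
  rw [← hT]
  exact hz _ (hTU x hx)

theorem inner_apply_sq_le_of_nonneg {V : Submodule ℝ E} (hpos : ∀ z ∈ V, 0 ≤ ⟪z, T z⟫)
    {x y : E} (hx : x ∈ V) (hy : y ∈ V) : ⟪x, T y⟫ ^ 2 ≤ ⟪x, T x⟫ * ⟪y, T y⟫ := by
  have hyx : ⟪y, T x⟫ = ⟪x, T y⟫ := by rw [← hT, real_inner_comm]
  have hquad : ∀ t : ℝ, 0 ≤ ⟪y, T y⟫ * (t * t) + 2 * ⟪x, T y⟫ * t + ⟪x, T x⟫ := fun t => by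
    have h := hpos (x + t • y) (V.add_mem hx (V.smul_mem t hy))
    simp only [map_add, map_smul, inner_add_left, inner_add_right, real_inner_smul_left,
      real_inner_smul_right, hyx] at h
    linarith
  have := discrim_le_zero hquad
  rw [discrim] at this
  nlinarith

theorem norm_apply_sub_half_smul_le {V : Submodule ℝ E} (hTV : ∀ z ∈ V, T z ∈ V)
    (hpos : ∀ z ∈ V, 0 ≤ ⟪z, T z⟫) {m : ℝ} (hle : ∀ z ∈ V, ⟪z, T z⟫ ≤ m * ‖z‖ ^ 2) {z : E}
    (hz : z ∈ V) : ‖T z - (m / 2) • z‖ ≤ m / 2 * ‖z‖ := by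
  -- `T² ≤ m T` on `V`, by Cauchy–Schwarz for the semi-inner product `⟪·, T ·⟫`
  have hTz : ‖T z‖ ^ 2 ≤ m * ⟪z, T z⟫ := by
    by_cases hTz0 : T z = 0
    · simp [hTz0]
    have hcs := inner_apply_sq_le_of_nonneg hT hpos hz (hTV z hz)
    rw [← hT, real_inner_self_eq_norm_sq] at hcs
    have hTTz := hle (T z) (hTV z hz)
    refine le_of_mul_le_mul_left (a := ‖T z‖ ^ 2) ?_ (by positivity)
    nlinarith [hpos z hz]
  have hmz : 0 ≤ m * ‖z‖ := by
    rcases (norm_nonneg z).eq_or_lt with h0 | h0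
    · simp [← h0]
    · have : 0 * ‖z‖ ≤ m * ‖z‖ * ‖z‖ := by nlinarith [hpos z hz, hle z hz]
      exact le_of_mul_le_mul_right this h0
  refine (pow_le_pow_iff_left₀ (norm_nonneg _) (by linarith) two_ne_zero).1 ?_
  rw [norm_sub_sq_real, real_inner_smul_right, norm_smul, real_inner_comm, mul_pow,
    Real.norm_eq_abs, sq_abs]
  linear_combination hTz

theorem inner_apply_self_eq_add_of_invariant (F : Submodule ℝ E) [F.HasOrthogonalProjection]
    (hTF : ∀ x ∈ F, T x ∈ F) (z : E) :
    ⟪z, T z⟫ = ⟪F.starProjection z, T (F.starProjection z)⟫ +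
      ⟪Fᗮ.starProjection z, T (Fᗮ.starProjection z)⟫ := by
  have hz := starProjection_add_starProjection_orthogonal (K := F) z
  set a := F.starProjection z
  set b := Fᗮ.starProjection z
  have hba : ⟪b, T a⟫ = 0 :=
    inner_left_of_mem_orthogonal (hTF a (starProjection_apply_mem F z))
      (starProjection_apply_mem _ z)
  have hab : ⟪a, T b⟫ = 0 := by rw [← hT, real_inner_comm, hba]
  conv_lhs => rw [← hz]
  rw [map_add, inner_add_left, inner_add_right, inner_add_right, hab, hba]
  ring

theorem OrthonormalOn.inner_apply_le_of_mem_orthogonal {ι : Type*} [DecidableEq ι]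
    {s t : Finset ι} {η : ι → E} (hη : OrthonormalOn t η) (hst : s ⊆ t) {μ : ι → ℝ}
    (hTη : ∀ i ∈ t, T (η i) = μ i • η i) {m : ℝ} (hμ : ∀ i ∈ t \ s, μ i ≤ m)
    (hres : ∀ w ∈ (span ℝ (η '' t))ᗮ, ⟪w, T w⟫ ≤ m * ‖w‖ ^ 2) {z : E}
    (hz : z ∈ (span ℝ (η '' s))ᗮ) : ⟪z, T z⟫ ≤ m * ‖z‖ ^ 2 := by
  set F := span ℝ (η '' ↑(t \ s))
  have hF : OrthonormalOn (t \ s) η := fun i hi j hj =>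
    hη i (Finset.sdiff_subset hi) j (Finset.sdiff_subset hj)
  have hTF : ∀ i ∈ t \ s, T (η i) = μ i • η i := fun i hi => hTη i (Finset.sdiff_subset hi)
  have hFs : F ≤ (span ℝ (η '' s))ᗮ := by
    refine isOrtho_iff_le.1 (isOrtho_span.2 ?_)
    rintro _ ⟨i, hi, rfl⟩ _ ⟨j, hj, rfl⟩
    rw [Finset.coe_sdiff, Set.mem_sdiff] at hi
    rw [hη i (Finset.sdiff_subset (Finset.mem_sdiff.2 hi)) j (hst hj), if_neg]
    rintro rfl
    exact hi.2 hj
  have hspan : span ℝ (η '' t) = span ℝ (η '' s) ⊔ F := by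
    rw [← span_union, ← Set.image_union, Finset.coe_sdiff, Set.union_sdiff_cancel (by simpa)]
  have hzF : Fᗮ.starProjection z ∈ (span ℝ (η '' t))ᗮ := by
    rw [hspan, ← inf_orthogonal, starProjection_orthogonal_val]
    exact ⟨sub_mem hz (hFs (starProjection_apply_mem F z)), sub_starProjection_mem_orthogonal z⟩
  rw [inner_apply_self_eq_add_of_invariant hT F (fun x hx => apply_mem_span_image_of_eigen hTF hx),
    norm_sq_eq_add_norm_sq_starProjection z F, mul_add]
  exact add_le_add (hF.inner_apply_le_of_mem_span hTF hμ (starProjection_apply_mem F z))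
    (hres _ hzF)

end Operator

theorem Finset.sum_Icc_one_eq_add_sum_Ioc {M : Type*} [AddCommMonoid M] (f : ℕ → M) {k n : ℕ}
    (hkn : k ≤ n) : ∑ j ∈ Icc 1 n, f j = ∑ j ∈ Icc 1 k, f j + ∑ j ∈ Ioc k n, f j := by
  have hIcc : ∀ m, Icc 1 m = Ioc 0 m := fun m => by ext; simp; omega
  rw [hIcc, hIcc, sum_Ioc_consecutive f (Nat.zero_le k) hkn]

/-- `a j` and `a' j` stand for `‖P_E γ_j‖²` and `‖P_V γ_j‖²`, where `V` is the projection of `E`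
onto `Φ`. -/
theorem improved_bound_of_sums {k n : ℕ} (hkn : k ≤ n) {a a' : ℕ → ℝ} {gp θ : ℝ} (hgp : 0 < gp)
    (ha : ∀ j ∈ Finset.Ioc k n, 0 ≤ a j) (hfar : ∀ j ∈ Finset.Ioc k n, a j ≤ a' j)
    (htot : ∑ j ∈ Finset.Icc 1 n, a' j ≤ k)
    (hnear : ∀ j ∈ Finset.Icc 1 k, gp ^ 2 * (1 - a' j) ≤ θ ^ 2 * (a' j - a j)) :
    k - ∑ j ∈ Finset.Icc 1 n, a j ≤ k - ∑ j ∈ Finset.Icc 1 k, a j ∧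
      k - ∑ j ∈ Finset.Icc 1 k, a j ≤ (1 + (θ / gp) ^ 2) * (k - ∑ j ∈ Finset.Icc 1 n, a j) := by
  rw [Finset.sum_Icc_one_eq_add_sum_Ioc _ hkn] at htot ⊢
  set A := ∑ j ∈ Finset.Icc 1 k, a j
  set B := ∑ j ∈ Finset.Ioc k n, a j
  set A' := ∑ j ∈ Finset.Icc 1 k, a' j
  have hB : 0 ≤ B := Finset.sum_nonneg ha
  have hBB' : B ≤ ∑ j ∈ Finset.Ioc k n, a' j := Finset.sum_le_sum hfar
  have hnear_sum : gp ^ 2 * (k - A') ≤ θ ^ 2 * (A' - A) := by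
    have := Finset.sum_le_sum hnear
    rwa [← Finset.mul_sum, ← Finset.mul_sum, Finset.sum_sub_distrib, Finset.sum_sub_distrib,
      Finset.sum_const, Nat.card_Icc, Nat.add_sub_cancel, nsmul_one] at this
  have hfrac : B ≤ θ ^ 2 * (k - (A + B)) / gp ^ 2 := by
    rw [le_div_iff₀ (by positivity)]
    nlinarith [sq_nonneg θ]
  refine ⟨by linarith, ?_⟩
  rw [div_pow, add_mul, one_mul, div_mul_eq_mul_div]
  linarith

theorem ritz_dF_sq_bounds {T : H →L[ℝ] H} (hT : ∀ x y, ⟪T x, y⟫ = ⟪x, T y⟫) {k n : ℕ}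
    (hkn : k ≤ n) {η γ : ℕ → H} (hη : OrthonormalOn (Finset.Icc 1 k) η)
    (hγ : OrthonormalOn (Finset.Icc 1 n) γ)
    (hTE : ∀ x ∈ span ℝ (η '' ↑(Finset.Icc 1 k)), T x ∈ span ℝ (η '' ↑(Finset.Icc 1 k)))
    (hpos : ∀ z ∈ (span ℝ (η '' ↑(Finset.Icc 1 k)))ᗮ, 0 ≤ ⟪z, T z⟫) {m : ℝ}
    (hray : ∀ z ∈ (span ℝ (η '' ↑(Finset.Icc 1 k)))ᗮ, ⟪z, T z⟫ ≤ m * ‖z‖ ^ 2) {lam : ℕ → ℝ}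
    (hritz : ∀ j ∈ Finset.Icc 1 n,
      (span ℝ (γ '' ↑(Finset.Icc 1 n))).starProjection (T (γ j)) = lam j • γ j)
    (hlam : ∀ j ∈ Finset.Icc 1 k, lam k ≤ lam j) (hgap : m < lam k) :
    dF (span ℝ (η '' ↑(Finset.Icc 1 k))) (span ℝ (γ '' ↑(Finset.Icc 1 n))) ^ 2 ≤
        dF (span ℝ (γ '' ↑(Finset.Icc 1 k))) (span ℝ (η '' ↑(Finset.Icc 1 k))) ^ 2 ∧
      dF (span ℝ (γ '' ↑(Finset.Icc 1 k))) (span ℝ (η '' ↑(Finset.Icc 1 k))) ^ 2 ≤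
        (1 + (m / 2 / (lam k - m)) ^ 2) *
          dF (span ℝ (η '' ↑(Finset.Icc 1 k))) (span ℝ (γ '' ↑(Finset.Icc 1 n))) ^ 2 := by
  set E := span ℝ (η '' ↑(Finset.Icc 1 k))
  set Φ := span ℝ (γ '' ↑(Finset.Icc 1 n))
  set V := E.map (Φ.starProjection : H →ₗ[ℝ] H)
  have hVΦ : V ≤ Φ := map_le_iff_le_comap.2 fun x _ => starProjection_apply_mem Φ x
  have hEV : ∀ x ∈ E, Φ.starProjection x ∈ V := fun x hx => mem_map_of_mem hx
  have hγΦ : ∀ j ∈ Finset.Icc 1 n, γ j ∈ Φ := fun j hj => subset_span (Set.mem_image_of_mem γ hj)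
  have hγk : OrthonormalOn (Finset.Icc 1 k) γ := fun i hi j hj =>
    hγ i (Finset.Icc_subset_Icc_right hkn hi) j (Finset.Icc_subset_Icc_right hkn hj)
  have hcontr : ∀ z ∈ Eᗮ, ‖T z - (m / 2) • z‖ ≤ m / 2 * ‖z‖ := fun z hz =>
    norm_apply_sub_half_smul_le hT (fun _ hw => apply_mem_orthogonal_of_invariant hT hTE hw)
      hpos hray hz
  rw [hη.dF_span_sq, hη.sum_norm_sq_starProjection_comm hγ, hγk.dF_span_sq, Nat.card_Icc,
    Nat.add_sub_cancel]
  refine improved_bound_of_sums (a' := fun j => ‖V.starProjection (γ j)‖ ^ 2) hkn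
    (sub_pos.2 hgap) (fun j _ => sq_nonneg _)
    (fun j hj => ?_) ?_ fun j hj => ?_
  · rw [← starProjection_starProjection_of_le hVΦ hEV (hγΦ j (by simp at hj ⊢; omega))]
    exact pow_le_pow_left₀ (norm_nonneg _) (norm_starProjection_apply_le _ _) 2
  · rw [hγ.sum_norm_sq_starProjection_of_le hVΦ]
    exact_mod_cast (finrank_map_le _ E).trans ((finrank_span_image_finset_le _ η).trans (by simp))
  · have hjn := Finset.Icc_subset_Icc_right hkn hj
    rw [← hγk.norm_sq hj]
    exact ritz_residual_sq_le hVΦ hEV hTE hray hcontr (hγΦ j hjn) (hritz j hjn)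
      (sub_nonneg.2 hgap.le) (sub_le_sub_right (hlam j hj) _)

theorem stmt8_general {H : Type*} [NormedAddCommGroup H] [InnerProductSpace ℝ H] [CompleteSpace H]
    (T : H →L[ℝ] H)
    (hTsa : ∀ x y : H, ⟪T x, y⟫ = ⟪x, T y⟫)
    (hTpos : ∀ u : H, 0 ≤ ⟪u, T u⟫)
    (r : ℕ) (η : ℕ → H) (μ : ℕ → ℝ)
    (hη : ∀ i ∈ Set.Icc 1 r, ∀ j ∈ Set.Icc 1 r, ⟪η i, η j⟫ = if i = j then (1 : ℝ) else 0)
    (hTeig : ∀ i ∈ Set.Icc 1 r, T (η i) = μ i • η i)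
    (hμmono : ∀ i ∈ Set.Icc 1 (r + 1), ∀ j ∈ Set.Icc 1 (r + 1), i ≤ j → μ j ≤ μ i)
    (hTres : ∀ w ∈ (span ℝ (η '' Set.Icc 1 r))ᗮ, ⟪w, T w⟫ ≤ μ (r + 1) * ‖w‖ ^ 2)
    (n : ℕ) (Φ : Submodule ℝ H)
    (lam : ℕ → ℝ) (γ : ℕ → H)
    (hγ : ∀ i ∈ Set.Icc 1 n, ∀ j ∈ Set.Icc 1 n, ⟪γ i, γ j⟫ = if i = j then (1 : ℝ) else 0)
    (hγspan : span ℝ (γ '' Set.Icc 1 n) = Φ)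
    (hγeig : ∀ i ∈ Set.Icc 1 n, proj Φ (T (γ i)) = lam i • γ i)
    (hlam : ∀ i ∈ Set.Icc 1 n, ∀ j ∈ Set.Icc 1 n, i ≤ j → lam j ≤ lam i)
    (k : ℕ) (hkp : k ≤ min n r)
    (hgap : μ (k + 1) < lam k) :
    dF (span ℝ (η '' Set.Icc 1 k)) Φ ^ 2 ≤
        dF (span ℝ (γ '' Set.Icc 1 k)) (span ℝ (η '' Set.Icc 1 k)) ^ 2 ∧
      dF (span ℝ (γ '' Set.Icc 1 k)) (span ℝ (η '' Set.Icc 1 k)) ^ 2 ≤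
        (1 + (1 / 4) * (μ (k + 1) / (lam k - μ (k + 1))) ^ 2) *
          dF (span ℝ (η '' Set.Icc 1 k)) Φ ^ 2 := by
  obtain ⟨hkn, hkr⟩ := le_min_iff.1 hkp
  subst hγspan
  simp only [← Finset.coe_Icc] at hη hγ hTeig hμmono hTres hγeig hlam ⊢
  have hηr : OrthonormalOn (Finset.Icc 1 r) η := hη
  have hkr' : Finset.Icc 1 k ⊆ Finset.Icc 1 r := Finset.Icc_subset_Icc_right hkr
  have hμk : μ (r + 1) ≤ μ (k + 1) := hμmono (k + 1) (by simp; omega) (r + 1) (by simp) (by omega)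
  have hray : ∀ z ∈ (span ℝ (η '' ↑(Finset.Icc 1 k)))ᗮ, ⟪z, T z⟫ ≤ μ (k + 1) * ‖z‖ ^ 2 :=
    fun z hz => hηr.inner_apply_le_of_mem_orthogonal hTsa hkr' hTeig
      (fun i hi =>
        hμmono (k + 1) (by simp; omega) i (by simp at hi ⊢; omega) (by simp at hi; omega))
      (fun w hw => (hTres w hw).trans (mul_le_mul_of_nonneg_right hμk (sq_nonneg _))) hz
  rw [show 1 / 4 * (μ (k + 1) / (lam k - μ (k + 1))) ^ 2 =
    (μ (k + 1) / 2 / (lam k - μ (k + 1))) ^ 2 by ring]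
  exact ritz_dF_sq_bounds hTsa hkn (fun i hi j hj => hηr i (hkr' hi) j (hkr' hj)) hγ
    (fun x hx => apply_mem_span_image_of_eigen (fun i hi => hTeig i (hkr' hi)) hx)
    (fun z _ => hTpos z) hray (fun j hj => by rw [← proj_eq_starProjection]; exact hγeig j hj)
    (fun j hj => hlam j (Finset.Icc_subset_Icc_right hkn hj) k (by simp at hj ⊢; omega)
      (Finset.mem_Icc.1 hj).2) hgap

/-- Improved eigenspace bound:
`d_F(E₁ₖ, Φ)² ≤ d_F(Γ₁ₖ, E₁ₖ)² ≤ (1 + (1/4)(μ_{k+1}/(λ_k − μ_{k+1}))²) d_F(E₁ₖ, Φ)²`. -/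
theorem stmt8 {H : Type*} [NormedAddCommGroup H] [InnerProductSpace ℝ H] [CompleteSpace H]
    (T : H →L[ℝ] H)
    (hTsa : ∀ x y : H, ⟪T x, y⟫ = ⟪x, T y⟫)
    (hTpos : ∀ u : H, 0 ≤ ⟪u, T u⟫)
    (r : ℕ) (hr : 1 ≤ r) (η : ℕ → H) (μ : ℕ → ℝ)
    (hη : ∀ i ∈ Set.Icc 1 r, ∀ j ∈ Set.Icc 1 r, ⟪η i, η j⟫ = if i = j then (1 : ℝ) else 0)
    (hTeig : ∀ i ∈ Set.Icc 1 r, T (η i) = μ i • η i)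
    (hμmono : ∀ i ∈ Set.Icc 1 (r + 1), ∀ j ∈ Set.Icc 1 (r + 1), i ≤ j → μ j ≤ μ i)
    (hμr : 0 < μ r) (hμr1 : 0 ≤ μ (r + 1))
    (hTinv : ∀ w ∈ (span ℝ (η '' Set.Icc 1 r))ᗮ, T w ∈ (span ℝ (η '' Set.Icc 1 r))ᗮ)
    (hTres : ∀ w ∈ (span ℝ (η '' Set.Icc 1 r))ᗮ, ⟪w, T w⟫ ≤ μ (r + 1) * ‖w‖ ^ 2)
    (n : ℕ) (Φ : Submodule ℝ H) (hΦfd : FiniteDimensional ℝ Φ) (hΦn : Module.finrank ℝ Φ = n)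
    (lam : ℕ → ℝ) (γ : ℕ → H)
    (hγ : ∀ i ∈ Set.Icc 1 n, ∀ j ∈ Set.Icc 1 n, ⟪γ i, γ j⟫ = if i = j then (1 : ℝ) else 0)
    (hγspan : span ℝ (γ '' Set.Icc 1 n) = Φ)
    (hγeig : ∀ i ∈ Set.Icc 1 n, proj Φ (T (γ i)) = lam i • γ i)
    (hlam : ∀ i ∈ Set.Icc 1 n, ∀ j ∈ Set.Icc 1 n, i ≤ j → lam j ≤ lam i)
    (hlin : LinearIndependent ℝ (fun i : Set.Icc 1 (min n r) => proj Φ (η i.1)))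
    (k : ℕ) (hk1 : 1 ≤ k) (hkp : k ≤ min n r)
    (hgap : μ (k + 1) < lam k) :
    dF (span ℝ (η '' Set.Icc 1 k)) Φ ^ 2 ≤
        dF (span ℝ (γ '' Set.Icc 1 k)) (span ℝ (η '' Set.Icc 1 k)) ^ 2 ∧
      dF (span ℝ (γ '' Set.Icc 1 k)) (span ℝ (η '' Set.Icc 1 k)) ^ 2 ≤
        (1 + (1 / 4) * (μ (k + 1) / (lam k - μ (k + 1))) ^ 2) *
          dF (span ℝ (η '' Set.Icc 1 k)) Φ ^ 2 :=
  stmt8_general T hTsa hTpos r η μ hη hTeig hμmono hTres n Φ lam γ hγ hγspan hγeig hlam k hkp hgap
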